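/- The 2-dissection identity 1/(q;q)_∞^2 = (q^8;q^8)_∞^5 / ((q^2;q^2)_∞^5 (q^{16};q^{16})_∞^2) + 2q (q^4;q^4)_∞^2 (q^{16};q^{16})_∞^2 / ((q^2;q^2)_∞^5 (q^8;q^8)_∞) holds as formal power series. -/

import Mathlib

open PowerSeries

/-- `(q^a; q^c)_∞ = ∏_{i ≥ 0} (1 - q^{a + c·i})` as a formal power series in `q = X`
(for `a ≥ 1`, the `n`-th coefficient only depends on the first `n+1` factors). -/
noncomputable def qp (a c : ℕ) : PowerSeries ℚ :=
  PowerSeries.mk fun n =>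
    PowerSeries.coeff n
      (∏ i ∈ Finset.range (n + 1), (1 - (PowerSeries.X : PowerSeries ℚ) ^ (a + c * i)))

/-!
Write `f m = (q^m; q^m)_∞`, `φ(q) = ∑_{k ∈ ℤ} q^(k²)` and `ψ(q) = ∑_{k ∈ ℤ} q^(2k² + k)`.
The Jacobi triple product gives `φ(q) = f 2 ^ 5 / (f 1 ^ 2 * f 4 ^ 2)` and
`ψ(q) = f 2 ^ 2 / f 1`, and sorting the `k` in `φ(q)` into even `k` and odd `k = ±(4l + 1)`
gives `φ(q) = φ(q⁴) + 2q ψ(q⁸)`. Hence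
`1 / f 1 ^ 2 = φ(q) f 4 ^ 2 / f 2 ^ 5 = (φ(q⁴) + 2q ψ(q⁸)) f 4 ^ 2 / f 2 ^ 5`,
and the product forms of `φ(q⁴)` and `ψ(q⁸)` turn this into the dissection.

Every identity between power series is checked modulo `X^N` for all `N`, where infinite
products may be replaced by finite ones. The triple product comes from the finite `q`-binomial
theorem at `Q = q^(2u)`: multiplied by `(Q; Q)_(2N)`, the Gaussian binomial `[2N, j]_Q` becomes
`1` modulo `Q^(min(j, 2N - j) + 1)`, and the factor `q^(u(j - N)² + v(j - N))` it comes with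
pushes this modulus past `X^N`.
-/

open Finset

namespace TwoDissection

section Congruence

variable {R : Type*} [CommRing R] {d e : ℕ} {f g : R⟦X⟧}

theorem smodEq_X_pow_iff :
    f ≡ g [SMOD Ideal.span {(X : R⟦X⟧) ^ d}] ↔ ∀ m < d, coeff m f = coeff m g := by
  simp [SModEq.sub_mem, Ideal.mem_span_singleton, X_pow_dvd_iff, sub_eq_zero]

theorem eq_of_forall_smodEq_X_pow (h : ∀ d, f ≡ g [SMOD Ideal.span {(X : R⟦X⟧) ^ d}]) :
    f = g :=
  ext fun m => smodEq_X_pow_iff.mp (h (m + 1)) m m.lt_succ_self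

theorem _root_.SModEq.of_X_pow_le (h : f ≡ g [SMOD Ideal.span {(X : R⟦X⟧) ^ e}])
    (hd : d ≤ e) : f ≡ g [SMOD Ideal.span {(X : R⟦X⟧) ^ d}] :=
  h.mono (Ideal.span_singleton_le_span_singleton.mpr (pow_dvd_pow X hd))

theorem X_pow_smodEq_zero (h : d ≤ e) :
    (X : R⟦X⟧) ^ e ≡ 0 [SMOD Ideal.span {(X : R⟦X⟧) ^ d}] :=
  SModEq.zero.mpr (Ideal.mem_span_singleton.mpr (pow_dvd_pow X h))

theorem X_pow_mul_smodEq (h : f ≡ g [SMOD Ideal.span {(X : R⟦X⟧) ^ d}]) :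
    X ^ e * f ≡ X ^ e * g [SMOD Ideal.span {(X : R⟦X⟧) ^ (e + d)}] := by
  rw [SModEq.sub_mem, Ideal.mem_span_singleton, ← mul_sub, pow_add]
  exact mul_dvd_mul_left _ (Ideal.mem_span_singleton.mp (SModEq.sub_mem.mp h))

theorem one_sub_X_pow_smodEq_one (h : d ≤ e) :
    1 - (X : R⟦X⟧) ^ e ≡ 1 [SMOD Ideal.span {X ^ d}] := by
  simpa using (SModEq.refl (1 : R⟦X⟧)).sub (X_pow_smodEq_zero h)

theorem one_add_X_pow_smodEq_one (h : d ≤ e) :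
    1 + (X : R⟦X⟧) ^ e ≡ 1 [SMOD Ideal.span {X ^ d}] := by
  simpa using (SModEq.refl (1 : R⟦X⟧)).add (X_pow_smodEq_zero h)

end Congruence

section InfiniteProduct

variable {R : Type*} [CommRing R] {d M N : ℕ} {f g : ℕ → R⟦X⟧}

/-- `∏_{i ≥ 0} f i`, its `n`-th coefficient read off from the first `n + 1` factors. This is the
infinite product when `f i ≡ 1 mod X^(i + 1)`, the standing hypothesis below. -/
noncomputable def infProd (f : ℕ → R⟦X⟧) : R⟦X⟧ :=
  mk fun n => coeff n (∏ i ∈ range (n + 1), f i)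

theorem prod_range_smodEq_of_le (hf : ∀ i, f i ≡ 1 [SMOD Ideal.span {X ^ (i + 1)}])
    (hMN : M ≤ N) (hd : d ≤ M) :
    ∏ i ∈ range N, f i ≡ ∏ i ∈ range M, f i [SMOD Ideal.span {X ^ d}] := by
  obtain ⟨K, rfl⟩ := Nat.exists_eq_add_of_le hMN
  have htail : ∏ i ∈ range K, f (M + i) ≡ 1 [SMOD Ideal.span {X ^ d}] := by
    simpa using SModEq.prod fun i _ => (hf (M + i)).of_X_pow_le (by omega)
  simpa [prod_range_add] using (SModEq.refl (∏ i ∈ range M, f i)).mul htail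

theorem infProd_smodEq_prod_range (hf : ∀ i, f i ≡ 1 [SMOD Ideal.span {X ^ (i + 1)}])
    (hd : d ≤ N) : infProd f ≡ ∏ i ∈ range N, f i [SMOD Ideal.span {X ^ d}] := by
  refine smodEq_X_pow_iff.mpr fun m hm => ?_
  rw [infProd, coeff_mk]
  exact (smodEq_X_pow_iff.mp (prod_range_smodEq_of_le hf (by omega : m + 1 ≤ N) le_rfl) m
    m.lt_succ_self).symm

theorem infProd_mul_infProd (hf : ∀ i, f i ≡ 1 [SMOD Ideal.span {X ^ (i + 1)}])
    (hg : ∀ i, g i ≡ 1 [SMOD Ideal.span {X ^ (i + 1)}]) :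
    infProd f * infProd g = infProd fun i => f i * g i := by
  have hfg : ∀ i, f i * g i ≡ 1 [SMOD Ideal.span {X ^ (i + 1)}] := fun i => by
    simpa using (hf i).mul (hg i)
  refine eq_of_forall_smodEq_X_pow fun d => ?_
  grw [infProd_smodEq_prod_range hf le_rfl, infProd_smodEq_prod_range hg le_rfl,
    infProd_smodEq_prod_range hfg (le_refl d), prod_mul_distrib]

theorem prod_range_two_mul (f : ℕ → R) (N : ℕ) :
    ∏ i ∈ range (2 * N), f i = (∏ i ∈ range N, f (2 * i)) * ∏ i ∈ range N, f (2 * i + 1) := by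
  induction N with
  | zero => simp
  | succ N ih =>
    rw [show 2 * (N + 1) = 2 * N + 1 + 1 by ring, prod_range_succ, prod_range_succ, ih,
      prod_range_succ, prod_range_succ]
    ring

theorem infProd_eq_mul_even_odd (hf : ∀ i, f i ≡ 1 [SMOD Ideal.span {X ^ (i + 1)}]) :
    infProd f = infProd (fun i => f (2 * i)) * infProd (fun i => f (2 * i + 1)) := by
  refine eq_of_forall_smodEq_X_pow fun d => ?_
  grw [infProd_smodEq_prod_range hf (N := 2 * d) (by omega), prod_range_two_mul,
    infProd_smodEq_prod_range (f := fun i => f (2 * i))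
      (fun i => (hf (2 * i)).of_X_pow_le (by omega)) (le_refl d),
    infProd_smodEq_prod_range (f := fun i => f (2 * i + 1))
      (fun i => (hf (2 * i + 1)).of_X_pow_le (by omega)) (le_refl d)]

end InfiniteProduct

section QPochhammer

/-- `(-q^a; q^c)_∞ = ∏_{i ≥ 0} (1 + q^(a + c i))`. -/
noncomputable def qpPlus (a c : ℕ) : ℚ⟦X⟧ :=
  infProd fun i => 1 + X ^ (a + c * i)

theorem qp_eq_infProd (a c : ℕ) : qp a c = infProd fun i => 1 - X ^ (a + c * i) := rfl

variable {a c d N : ℕ}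

theorem qp_smodEq_prod_range (ha : 1 ≤ a) (hc : 1 ≤ c) (hd : d ≤ N) :
    qp a c ≡ ∏ i ∈ range N, (1 - X ^ (a + c * i)) [SMOD Ideal.span {X ^ d}] :=
  infProd_smodEq_prod_range (fun i => one_sub_X_pow_smodEq_one (by nlinarith)) hd

theorem qpPlus_smodEq_prod_range (ha : 1 ≤ a) (hc : 1 ≤ c) (hd : d ≤ N) :
    qpPlus a c ≡ ∏ i ∈ range N, (1 + X ^ (a + c * i)) [SMOD Ideal.span {X ^ d}] :=
  infProd_smodEq_prod_range (fun i => one_add_X_pow_smodEq_one (by nlinarith)) hd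

theorem constantCoeff_qp (ha : 1 ≤ a) (c : ℕ) : constantCoeff (qp a c) = 1 := by
  rw [← coeff_zero_eq_constantCoeff_apply, qp, coeff_mk]
  simp [show a ≠ 0 by omega]

theorem qp_mul_qpPlus (ha : 1 ≤ a) (hc : 1 ≤ c) :
    qp a c * qpPlus a c = qp (2 * a) (2 * c) := by
  rw [qp_eq_infProd, qpPlus, infProd_mul_infProd
    (fun i => one_sub_X_pow_smodEq_one (by nlinarith))
    (fun i => one_add_X_pow_smodEq_one (by nlinarith)), qp_eq_infProd]
  congr 1
  funext i
  rw [show 2 * a + 2 * c * i = (a + c * i) * 2 by ring, pow_mul]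
  ring

theorem qp_eq_qp_mul_qp (ha : 1 ≤ a) (hc : 1 ≤ c) :
    qp a c = qp a (2 * c) * qp (a + c) (2 * c) := by
  rw [qp_eq_infProd,
    infProd_eq_mul_even_odd (fun i => one_sub_X_pow_smodEq_one (by nlinarith)),
    qp_eq_infProd, qp_eq_infProd]
  congr 2 <;> funext i <;> ring_nf

end QPochhammer

section GaussianBinomial

variable {R : Type*} [CommRing R] (Q : R)

def gaussBinom : ℕ → ℕ → R
  | _, 0 => 1
  | 0, _ + 1 => 0
  | M + 1, j + 1 => gaussBinom M j + Q ^ (j + 1) * gaussBinom M (j + 1)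

@[simp]
theorem gaussBinom_zero_right (M : ℕ) : gaussBinom Q M 0 = 1 := by
  cases M <;> rfl

theorem gaussBinom_succ_succ (M j : ℕ) :
    gaussBinom Q (M + 1) (j + 1) = gaussBinom Q M j + Q ^ (j + 1) * gaussBinom Q M (j + 1) :=
  rfl

theorem gaussBinom_eq_zero_of_lt {M j : ℕ} (h : M < j) : gaussBinom Q M j = 0 := by
  induction M generalizing j with
  | zero => obtain ⟨j, rfl⟩ := Nat.exists_eq_add_one_of_ne_zero (by omega : j ≠ 0); rfl
  | succ M ih =>
    obtain ⟨j, rfl⟩ := Nat.exists_eq_add_one_of_ne_zero (by omega : j ≠ 0)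
    rw [gaussBinom_succ_succ, ih (by omega), ih (by omega), mul_zero, add_zero]

@[simp]
theorem gaussBinom_self (M : ℕ) : gaussBinom Q M M = 1 := by
  induction M with
  | zero => rfl
  | succ M ih => rw [gaussBinom_succ_succ, ih, gaussBinom_eq_zero_of_lt Q M.lt_succ_self]; simp

theorem gaussBinom_add_mul_prod (j r : ℕ) :
    gaussBinom Q (j + r) j * ∏ i ∈ range r, (1 - Q ^ (i + 1)) =
      ∏ i ∈ range r, (1 - Q ^ (j + i + 1)) := by
  induction j generalizing r with
  | zero => simp
  | succ j ihj =>
    induction r with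
    | zero => simp
    | succ r ihr =>
      have hstep := ihj (r + 1)
      rw [show j + (r + 1) = j + 1 + r by omega, prod_range_succ, prod_range_succ'] at hstep
      simp only [show ∀ i, j + (i + 1) + 1 = j + 1 + i + 1 from fun i => by omega] at hstep
      rw [show j + 1 + (r + 1) = j + 1 + r + 1 by omega, gaussBinom_succ_succ, prod_range_succ,
        prod_range_succ]
      linear_combination hstep + Q ^ (j + 1) * (1 - Q ^ (r + 1)) * ihr

/-- Cauchy's `q`-binomial theorem, in homogeneous form. -/
theorem prod_add_mul_pow_eq_sum_gaussBinom (M : ℕ) (w z : R) :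
    ∏ i ∈ range M, (w + z * Q ^ i) =
      ∑ j ∈ range (M + 1), Q ^ j.choose 2 * gaussBinom Q M j * z ^ j * w ^ (M - j) := by
  induction M generalizing z with
  | zero => simp
  | succ M ih =>
    obtain ⟨T, hT⟩ :
        ∃ T : ℕ → R, ∀ j, T j = Q ^ j.choose 2 * Q ^ j * gaussBinom Q M j * z ^ j :=
      ⟨_, fun _ => rfl⟩
    have hchoose (j : ℕ) : (j + 1).choose 2 = j.choose 2 + j := by
      rw [Nat.choose_succ_succ, Nat.choose_one_right, add_comm]
    have hS :
        ∏ i ∈ range M, (w + z * Q * Q ^ i) = ∑ j ∈ range (M + 1), T j * w ^ (M - j) := by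
      rw [ih (z * Q)]
      exact sum_congr rfl fun j _ => by rw [hT]; ring
    have hwS : ∑ j ∈ range (M + 2), T j * w ^ (M + 1 - j) =
        w * ∑ j ∈ range (M + 1), T j * w ^ (M - j) := by
      rw [sum_range_succ, hT, gaussBinom_eq_zero_of_lt Q M.lt_succ_self, mul_sum]
      simp only [mul_zero, zero_mul, add_zero]
      refine sum_congr rfl fun j hj => ?_
      rw [show M + 1 - j = M - j + 1 by have := mem_range.mp hj; omega, pow_succ]
      ring
    have hzS : ∑ j ∈ range (M + 2), Q ^ j.choose 2 * gaussBinom Q (M + 1) j * z ^ j *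
        w ^ (M + 1 - j) = ∑ j ∈ range (M + 2), T j * w ^ (M + 1 - j) +
          z * ∑ j ∈ range (M + 1), T j * w ^ (M - j) := by
      rw [sum_range_succ', sum_range_succ' (fun j => T j * w ^ (M + 1 - j)), mul_sum,
        add_right_comm, ← sum_add_distrib]
      congr 1
      · refine sum_congr rfl fun j _ => ?_
        rw [gaussBinom_succ_succ, hT, hT, Nat.add_sub_add_right]
        simp only [hchoose]
        ring
      · simp [hT]
    calc ∏ i ∈ range (M + 1), (w + z * Q ^ i)
        = (w + z) * ∏ i ∈ range M, (w + z * Q * Q ^ i) := by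
          rw [prod_range_succ', mul_comm]
          simp only [pow_succ, pow_zero, mul_one, mul_assoc, mul_comm Q]
      _ = _ := by rw [hzS, hwS, hS, add_mul]

end GaussianBinomial

section Theta

/-- `θ(u, v) = ∑_{k ∈ ℤ} q^(u k² + v k)`: its `n`-th coefficient counts the `k` with
`u k² + v k = n`. -/
noncomputable def theta (u v : ℕ) : ℚ⟦X⟧ :=
  mk fun n => Set.ncard {k : ℤ | u * k ^ 2 + v * k = n}

variable {u v : ℕ}

theorem abs_le_theta_exponent (hv : v < u) (k : ℤ) : |k| ≤ u * k ^ 2 + v * k := by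
  have hv' : (v : ℤ) + 1 ≤ u := by exact_mod_cast hv
  rcases le_or_gt 0 k with hk | hk
  · rw [abs_of_nonneg hk]
    nlinarith [Int.le_self_sq k, mul_nonneg (by linarith : (0 : ℤ) ≤ u - 1) (sq_nonneg k),
      mul_nonneg (Int.natCast_nonneg v) hk]
  · rw [abs_of_neg hk]
    have huk : (u : ℤ) * k ≤ -u := by nlinarith
    nlinarith [mul_nonneg (by linarith : (0 : ℤ) ≤ -k)
      (by linarith : (0 : ℤ) ≤ -(u * k + v) - 1)]

theorem theta_exponent_nonneg (hv : v < u) (k : ℤ) : 0 ≤ (u : ℤ) * k ^ 2 + v * k :=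
  (abs_nonneg k).trans (abs_le_theta_exponent hv k)

theorem theta_smodEq_sum (hv : v < u) {d : ℕ} {s : Finset ℤ} (hs : Icc (-(d : ℤ)) d ⊆ s) :
    theta u v ≡ ∑ k ∈ s, X ^ (u * k ^ 2 + v * k).toNat [SMOD Ideal.span {X ^ d}] := by
  refine smodEq_X_pow_iff.mpr fun m hm => ?_
  have hset : {k : ℤ | u * k ^ 2 + v * k = m} =
      ↑(s.filter fun k => m = (u * k ^ 2 + v * k).toNat) := by
    ext k
    have hk := abs_le (a := k) (b := u * k ^ 2 + v * k) |>.mp (abs_le_theta_exponent hv k)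
    simp only [Set.mem_ofPred_eq, coe_filter]
    constructor
    · intro h
      exact ⟨hs (mem_Icc.mpr ⟨by omega, by omega⟩), by omega⟩
    · rintro ⟨-, h⟩
      omega
  rw [theta, coeff_mk, hset, Set.ncard_coe_finset, map_sum]
  simp [coeff_X_pow]

end Theta

section JacobiTripleProduct

variable {u v : ℕ}

theorem gaussBinom_mul_prod_smodEq_one {R : Type*} [CommRing R] (e j r : ℕ) :
    gaussBinom ((X : R⟦X⟧) ^ e) (j + r) j * ∏ i ∈ range (j + r), (1 - X ^ (e + e * i)) ≡ 1
      [SMOD Ideal.span {X ^ (e * (min j r + 1))}] := by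
  have hsplit : ∏ i ∈ range (j + r), (1 - (X : R⟦X⟧) ^ (e + e * i)) =
      (∏ i ∈ range r, (1 - (X ^ e) ^ (i + 1))) *
        ∏ i ∈ range j, (1 - X ^ (e * (r + i + 1))) := by
    rw [add_comm j r, prod_range_add]
    congr 1 <;> refine prod_congr rfl fun i _ => ?_ <;> ring_nf
  rw [hsplit, ← mul_assoc, gaussBinom_add_mul_prod]
  simp only [← pow_mul]
  have hfactor (k : ℕ) (hk : min j r ≤ k) :
      1 - (X : R⟦X⟧) ^ (e * (k + 1)) ≡ 1 [SMOD Ideal.span {X ^ (e * (min j r + 1))}] :=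
    one_sub_X_pow_smodEq_one (Nat.mul_le_mul_left e (by omega))
  simpa using (SModEq.prod fun i _ => hfactor (j + i) (by omega)).mul
    (SModEq.prod fun i _ => hfactor (r + i) (by omega))

theorem qBinomial_term_exponent_eq (hv : v < u) {N j : ℕ} (hj : j ≤ 2 * N) :
    2 * u * j.choose 2 + (u + v) * j + 2 * u * N * (2 * N - j) =
      (∑ i ∈ range N, (u + v + 2 * u * i)) + 2 * u * N * N +
        (u * ((j : ℤ) - N) ^ 2 + v * ((j : ℤ) - N)).toNat := by
  have hsum : ∑ i ∈ range N, (u + v + 2 * u * i) = N * (u + v) + 2 * u * N.choose 2 := by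
    rw [sum_add_distrib, ← mul_sum, sum_const, card_range, smul_eq_mul, sum_range_id,
      Nat.choose_two_right]
  have he : (((u * ((j : ℤ) - N) ^ 2 + v * ((j : ℤ) - N)).toNat : ℕ) : ℚ) =
      u * ((j : ℚ) - N) ^ 2 + v * ((j : ℚ) - N) := by
    exact_mod_cast Int.toNat_of_nonneg (theta_exponent_nonneg hv ((j : ℤ) - N))
  rw [hsum]
  qify [hj]
  rw [he, Nat.cast_choose_two, Nat.cast_choose_two]
  ring

/-- The finite Jacobi triple product: the `q`-binomial theorem at `Q = X^(2u)`, `w = X^(2uN)`,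
`z = X^(u + v)`, after pulling `X^(u + v + 2ui)` out of the factors `i < N` and `X^(2uN)` out of
the others. -/
theorem prod_one_add_X_pow_mul_prod_one_add_X_pow_eq_sum {R : Type*} [CommRing R] (hv : v < u)
    (N : ℕ) :
    (∏ i ∈ range N, (1 + (X : R⟦X⟧) ^ (u + v + 2 * u * i))) *
        ∏ i ∈ range N, (1 + (X : R⟦X⟧) ^ (u - v + 2 * u * i)) =
      ∑ j ∈ range (2 * N + 1), X ^ (u * ((j : ℤ) - N) ^ 2 + v * ((j : ℤ) - N)).toNat *
        gaussBinom (X ^ (2 * u)) (2 * N) j := by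
  have hqbinom := prod_add_mul_pow_eq_sum_gaussBinom ((X : R⟦X⟧) ^ (2 * u)) (2 * N)
    (X ^ (2 * u * N)) (X ^ (u + v))
  have hlow : ∀ i ∈ range N, (X : R⟦X⟧) ^ (2 * u * N) + X ^ (u + v) * (X ^ (2 * u)) ^ i =
      X ^ (u + v + 2 * u * i) * (1 + X ^ (u - v + 2 * u * (N - 1 - i))) := by
    intro i hi
    obtain ⟨t, ht⟩ : ∃ t, N = i + 1 + t := ⟨N - 1 - i, by have := mem_range.mp hi; omega⟩
    rw [mul_add, mul_one, ← pow_mul, ← pow_add, ← pow_add, add_comm (X ^ (2 * u * N))]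
    congr 2
    rw [show N - 1 - i = t by omega, ht]
    zify [hv.le]
    ring
  have hhigh : ∀ i ∈ range N,
      (X : R⟦X⟧) ^ (2 * u * N) + X ^ (u + v) * (X ^ (2 * u)) ^ (N + i) =
        X ^ (2 * u * N) * (1 + X ^ (u + v + 2 * u * i)) := by
    intro i _
    rw [mul_add, mul_one, ← pow_mul, ← pow_add, ← pow_add]
    congr 2
    ring
  rw [two_mul, prod_range_add, prod_congr rfl hlow, prod_congr rfl hhigh, prod_mul_distrib,
    prod_mul_distrib, prod_range_reflect (fun i => 1 + (X : R⟦X⟧) ^ (u - v + 2 * u * i)),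
    prod_pow_eq_pow_sum, prod_const, card_range, ← pow_mul, ← two_mul] at hqbinom
  apply X_pow_mul_cancel (k := (∑ i ∈ range N, (u + v + 2 * u * i)) + 2 * u * N * N)
  rw [mul_sum, pow_add]
  calc _ = _ := by ring
    _ = _ := hqbinom
    _ = _ := sum_congr rfl fun j hj => by
      rw [← pow_add, ← mul_assoc, ← pow_add,
        ← qBinomial_term_exponent_eq hv (by have := mem_range.mp hj; omega), pow_add, pow_add,
        pow_mul, pow_mul, pow_mul]
      ring

theorem le_theta_exponent_add (hv : v < u) {N j r : ℕ} (hjr : j + r = 2 * N) :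
    N ≤ (u * ((j : ℤ) - N) ^ 2 + v * ((j : ℤ) - N)).toNat + 2 * u * (min j r + 1) := by
  have hnonneg := theta_exponent_nonneg hv ((j : ℤ) - N)
  have hv' : (v : ℤ) + 1 ≤ u := by exact_mod_cast hv
  have hquad (t : ℤ) : 0 ≤ (t - 1) * (t - 2) := by
    rcases le_or_gt t 1 with h | h <;> nlinarith
  rcases le_total j r with h | h
  · rw [min_eq_left h]
    zify
    rw [Int.toNat_of_nonneg hnonneg]
    have hjN : (j : ℤ) ≤ N := by omega
    nlinarith [mul_nonneg (by linarith : (0 : ℤ) ≤ u) (hquad (N - j)),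
      mul_le_mul_of_nonneg_right (by linarith : (v : ℤ) ≤ u - 1)
        (by linarith : (0 : ℤ) ≤ N - j)]
  · rw [min_eq_right h]
    zify
    rw [Int.toNat_of_nonneg hnonneg]
    have hjN : (N : ℤ) ≤ j := by omega
    nlinarith [mul_nonneg (by linarith : (0 : ℤ) ≤ u) (sq_nonneg ((j : ℤ) - N - 1)),
      mul_nonneg (Int.natCast_nonneg v) (by linarith : (0 : ℤ) ≤ j - N)]

theorem theta_eq_qp_mul_qpPlus_mul_qpPlus (hv : v < u) :
    theta u v = qp (2 * u) (2 * u) * qpPlus (u + v) (2 * u) * qpPlus (u - v) (2 * u) := by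
  refine eq_of_forall_smodEq_X_pow fun N => ?_
  have hcover : Icc (-(N : ℤ)) N ⊆ (range (2 * N + 1)).image fun j : ℕ => (j : ℤ) - N := by
    intro k hk
    rw [mem_Icc] at hk
    exact mem_image.mpr ⟨(k + N).toNat, mem_range.mpr (by omega), by omega⟩
  have hterm : ∀ j ∈ range (2 * N + 1),
      (X : ℚ⟦X⟧) ^ (u * ((j : ℤ) - N) ^ 2 + v * ((j : ℤ) - N)).toNat *
          (gaussBinom (X ^ (2 * u)) (2 * N) j *
            ∏ i ∈ range (2 * N), (1 - X ^ (2 * u + 2 * u * i)))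
        ≡ X ^ (u * ((j : ℤ) - N) ^ 2 + v * ((j : ℤ) - N)).toNat [SMOD Ideal.span {X ^ N}] := by
    intro j hj
    obtain ⟨r, hr⟩ : ∃ r, 2 * N = j + r := ⟨2 * N - j, by have := mem_range.mp hj; omega⟩
    rw [hr]
    simpa using (X_pow_mul_smodEq
      (gaussBinom_mul_prod_smodEq_one (R := ℚ) (2 * u) j r)).of_X_pow_le
        (le_theta_exponent_add hv hr.symm)
  calc theta u v
      ≡ ∑ k ∈ (range (2 * N + 1)).image (fun j : ℕ => (j : ℤ) - N),
          X ^ (u * k ^ 2 + v * k).toNat [SMOD Ideal.span {X ^ N}] := theta_smodEq_sum hv hcover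
    _ = ∑ j ∈ range (2 * N + 1), X ^ (u * ((j : ℤ) - N) ^ 2 + v * ((j : ℤ) - N)).toNat :=
        sum_image fun _ _ _ _ h => by simpa using h
    _ ≡ ∑ j ∈ range (2 * N + 1), X ^ (u * ((j : ℤ) - N) ^ 2 + v * ((j : ℤ) - N)).toNat *
          (gaussBinom (X ^ (2 * u)) (2 * N) j *
            ∏ i ∈ range (2 * N), (1 - X ^ (2 * u + 2 * u * i)))
          [SMOD Ideal.span {X ^ N}] := (SModEq.sum hterm).symm
    _ = (∏ i ∈ range (2 * N), (1 - X ^ (2 * u + 2 * u * i))) *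
          (∏ i ∈ range N, (1 + X ^ (u + v + 2 * u * i))) *
          ∏ i ∈ range N, (1 + X ^ (u - v + 2 * u * i)) := by
        rw [mul_assoc, prod_one_add_X_pow_mul_prod_one_add_X_pow_eq_sum hv, mul_sum]
        exact sum_congr rfl fun j _ => by ring
    _ ≡ qp (2 * u) (2 * u) * qpPlus (u + v) (2 * u) * qpPlus (u - v) (2 * u)
          [SMOD Ideal.span {X ^ N}] :=
        (((qp_smodEq_prod_range (by omega) (by omega) (by omega)).mul
          (qpPlus_smodEq_prod_range (by omega) (by omega) le_rfl)).mul
          (qpPlus_smodEq_prod_range (by omega) (by omega) le_rfl)).symm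

end JacobiTripleProduct

section Dissection

theorem theta_mul_qp_sq_mul_qp_sq {s : ℕ} (hs : 1 ≤ s) :
    theta s 0 * qp s s ^ 2 * qp (4 * s) (4 * s) ^ 2 = qp (2 * s) (2 * s) ^ 5 := by
  have hθ : theta s 0 = qp (2 * s) (2 * s) * qpPlus s (2 * s) * qpPlus s (2 * s) := by
    simpa using theta_eq_qp_mul_qpPlus_mul_qpPlus (u := s) (v := 0) hs
  have hs1 : qp s s = qp s (2 * s) * qp (2 * s) (2 * s) := by
    rw [qp_eq_qp_mul_qp hs hs]; ring_nf
  have hs2 : qp s (2 * s) * qpPlus s (2 * s) = qp (2 * s) (4 * s) := by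
    rw [qp_mul_qpPlus hs (by omega)]; ring_nf
  have hs3 : qp (2 * s) (2 * s) = qp (2 * s) (4 * s) * qp (4 * s) (4 * s) := by
    rw [qp_eq_qp_mul_qp (by omega) (by omega)]; ring_nf
  calc theta s 0 * qp s s ^ 2 * qp (4 * s) (4 * s) ^ 2
      = qp (2 * s) (2 * s) ^ 3 * (qp s (2 * s) * qpPlus s (2 * s)) ^ 2 *
          qp (4 * s) (4 * s) ^ 2 := by rw [hθ, hs1]; ring
    _ = qp (2 * s) (2 * s) ^ 3 * (qp (2 * s) (4 * s) * qp (4 * s) (4 * s)) ^ 2 := by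
        rw [hs2]; ring
    _ = qp (2 * s) (2 * s) ^ 5 := by rw [← hs3]; ring

theorem qp_mul_theta {s : ℕ} (hs : 1 ≤ s) :
    qp s s * theta (2 * s) s = qp (2 * s) (2 * s) ^ 2 := by
  have hθ : theta (2 * s) s =
      qp (4 * s) (4 * s) * qpPlus (3 * s) (4 * s) * qpPlus s (4 * s) := by
    rw [theta_eq_qp_mul_qpPlus_mul_qpPlus (by omega), show 2 * s - s = s by omega]; ring_nf
  have hs1 : qp s s = qp s (2 * s) * qp (2 * s) (2 * s) := by
    rw [qp_eq_qp_mul_qp hs hs]; ring_nf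
  have hs2 : qp s (2 * s) = qp s (4 * s) * qp (3 * s) (4 * s) := by
    rw [qp_eq_qp_mul_qp hs (by omega)]; ring_nf
  have hs3 : qp s (4 * s) * qpPlus s (4 * s) = qp (2 * s) (8 * s) := by
    rw [qp_mul_qpPlus hs (by omega)]; ring_nf
  have hs4 : qp (3 * s) (4 * s) * qpPlus (3 * s) (4 * s) = qp (6 * s) (8 * s) := by
    rw [qp_mul_qpPlus (by omega) (by omega)]; ring_nf
  have hs5 : qp (2 * s) (4 * s) = qp (2 * s) (8 * s) * qp (6 * s) (8 * s) := by
    rw [qp_eq_qp_mul_qp (by omega) (by omega)]; ring_nf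
  have hs6 : qp (2 * s) (2 * s) = qp (2 * s) (4 * s) * qp (4 * s) (4 * s) := by
    rw [qp_eq_qp_mul_qp (by omega) (by omega)]; ring_nf
  calc qp s s * theta (2 * s) s
      = qp (2 * s) (2 * s) * qp (4 * s) (4 * s) * (qp s (4 * s) * qpPlus s (4 * s)) *
          (qp (3 * s) (4 * s) * qpPlus (3 * s) (4 * s)) := by rw [hθ, hs1, hs2]; ring
    _ = qp (2 * s) (2 * s) * (qp (2 * s) (4 * s) * qp (4 * s) (4 * s)) := by
        rw [hs3, hs4, hs5]; ring
    _ = qp (2 * s) (2 * s) ^ 2 := by rw [← hs6]; ring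

theorem sum_sq_eq_sum_even_add_sum_odd (T : Finset ℤ) :
    ∑ k ∈ T.image (fun j => 2 * j) ∪
        (T.image (fun l => 4 * l + 1) ∪ T.image (fun l => -(4 * l + 1))),
        (X : ℚ⟦X⟧) ^ (k ^ 2).toNat =
      ∑ j ∈ T, X ^ (4 * j ^ 2).toNat + 2 * X * ∑ l ∈ T, X ^ (16 * l ^ 2 + 8 * l).toNat := by
  have heven (j : ℤ) : (X : ℚ⟦X⟧) ^ ((2 * j) ^ 2).toNat = X ^ (4 * j ^ 2).toNat := by ring_nf
  have hodd (l : ℤ) :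
      (X : ℚ⟦X⟧) ^ ((4 * l + 1) ^ 2).toNat = X * X ^ (16 * l ^ 2 + 8 * l).toNat := by
    have h := theta_exponent_nonneg (u := 16) (v := 8) (by norm_num) l
    push_cast at h
    rw [show (4 * l + 1) ^ 2 = 16 * l ^ 2 + 8 * l + ((1 : ℕ) : ℤ) by push_cast; ring,
      Int.toNat_add_nat h, pow_succ, mul_comm]
  rw [sum_union, sum_union, sum_image, sum_image, sum_image]
  · simp only [heven, hodd, neg_sq, ← mul_sum]
    ring
  · exact fun a _ b _ h => by simp only [neg_inj] at h; omega
  · exact fun a _ b _ h => by omega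
  · exact fun a _ b _ h => by omega
  · simp only [disjoint_left, mem_image]
    rintro _ ⟨a, -, rfl⟩ ⟨b, -, h⟩
    omega
  · simp only [disjoint_left, mem_union, mem_image]
    rintro _ ⟨a, -, rfl⟩ (⟨b, -, h⟩ | ⟨b, -, h⟩) <;> omega

theorem theta_one_zero_eq : theta 1 0 = theta 4 0 + 2 * X * theta 16 8 := by
  refine eq_of_forall_smodEq_X_pow fun d => ?_
  have hcover : Icc (-(d : ℤ)) d ⊆ (Icc (-(d : ℤ)) d).image (fun j => 2 * j) ∪
      ((Icc (-(d : ℤ)) d).image (fun l => 4 * l + 1) ∪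
        (Icc (-(d : ℤ)) d).image (fun l => -(4 * l + 1))) := by
    intro k hk
    rw [mem_Icc] at hk
    simp only [mem_union, mem_image, mem_Icc]
    by_cases h2 : k % 2 = 0
    · exact Or.inl ⟨k / 2, ⟨by omega, by omega⟩, by omega⟩
    by_cases h4 : k % 4 = 1
    · exact Or.inr (Or.inl ⟨(k - 1) / 4, ⟨by omega, by omega⟩, by omega⟩)
    · exact Or.inr (Or.inr ⟨(-k - 1) / 4, ⟨by omega, by omega⟩, by omega⟩)
  have h1 := theta_smodEq_sum (u := 1) (v := 0) one_pos hcover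
  have h4 := theta_smodEq_sum (u := 4) (v := 0) (by norm_num) (subset_refl (Icc (-(d : ℤ)) d))
  have h16 :=
    theta_smodEq_sum (u := 16) (v := 8) (by norm_num) (subset_refl (Icc (-(d : ℤ)) d))
  simp only [Nat.cast_one, Nat.cast_zero, Nat.cast_ofNat, one_mul, zero_mul, add_zero]
    at h1 h4 h16
  rw [sum_sq_eq_sum_even_add_sum_odd] at h1
  exact h1.trans (h4.add ((SModEq.refl (2 * X)).mul h16)).symm

theorem two_dissection_denominators_cleared :
    qp 2 2 ^ 5 * qp 8 8 * qp 16 16 ^ 2 =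
      qp 1 1 ^ 2 * (qp 8 8 ^ 6 + 2 * X * qp 4 4 ^ 2 * qp 16 16 ^ 4) := by
  have hφ1 := theta_mul_qp_sq_mul_qp_sq (s := 1) le_rfl
  have hφ4 := theta_mul_qp_sq_mul_qp_sq (s := 4) (by norm_num)
  have hψ8 := qp_mul_theta (s := 8) (by norm_num)
  norm_num at hφ1 hφ4 hψ8
  linear_combination (qp 8 8 * qp 1 1 ^ 2) * hφ4 - (qp 8 8 * qp 16 16 ^ 2) * hφ1
    + (2 * X * qp 16 16 ^ 2 * qp 1 1 ^ 2 * qp 4 4 ^ 2) * hψ8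
    + (qp 8 8 * qp 16 16 ^ 2 * qp 1 1 ^ 2 * qp 4 4 ^ 2) * theta_one_zero_eq

end Dissection

end TwoDissection

open TwoDissection in
/-- The 2-dissection of `1/(q;q)_∞²`:
`1/(q;q)_∞² = (q⁸;q⁸)_∞⁵/((q²;q²)_∞⁵ (q¹⁶;q¹⁶)_∞²) + 2q (q⁴;q⁴)_∞² (q¹⁶;q¹⁶)_∞²/((q²;q²)_∞⁵ (q⁸;q⁸)_∞)`. -/
theorem two_dissection :
    (qp 1 1 ^ 2)⁻¹ =
      qp 8 8 ^ 5 * (qp 2 2 ^ 5 * qp 16 16 ^ 2)⁻¹ +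
        2 * PowerSeries.X * qp 4 4 ^ 2 * qp 16 16 ^ 2 * (qp 2 2 ^ 5 * qp 8 8)⁻¹ := by
  have hc (a : ℕ) (ha : 1 ≤ a) : constantCoeff (qp a a) = 1 := constantCoeff_qp ha a
  rw [PowerSeries.inv_eq_iff_mul_eq_one (by simp [hc])]
  set U := qp 2 2 ^ 5 * qp 16 16 ^ 2
  set V := qp 2 2 ^ 5 * qp 8 8
  have hU := PowerSeries.mul_inv_cancel U (by simp [U, hc])
  have hV := PowerSeries.mul_inv_cancel V (by simp [V, hc])
  linear_combination -qp 2 2 ^ 5 * U⁻¹ * V⁻¹ * two_dissection_denominators_cleared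
    + (V * V⁻¹ - qp 1 1 ^ 2 * (2 * X * qp 4 4 ^ 2 * qp 16 16 ^ 2) * V⁻¹) * hU
    + (1 - qp 1 1 ^ 2 * qp 8 8 ^ 5 * U⁻¹) * hV
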